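/- Let G be a simple graph on Fin k (k ≥ 2) that is connected and d-regular with d ≥ 1, and let P : Fin k → ℝ be a probability vector with P i > 0 for all i and ∑ i, P i = 1. Define the k×k real symmetric matrix A_G(P) by A_G(P)_ii = (1/d) · ∑_{j ∈ N_G(i)} (P j − P i)/(P i + P j), A_G(P)_ij = −2√(P i · P j)/(d (P i + P j)) whenever {i,j} is an edge of G, and A_G(P)_ij = 0 otherwise. Then A_G(P) · v(P) = −v(P) where v(P)_i = √(P i), −1 is the smallest eigenvalue of A_G(P), and every x ∈ ℝ^k with A_G(P) · x = −x is a scalar multiple of v(P). -/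

import Mathlib

/-!
Substituting `x i = √(P i) * y i`, the quadratic form of `A + 1` becomes a weighted graph
Laplacian form: `x ⬝ᵥ (A + 1) x = (1/d) ∑_i ∑_{j ∈ N(i)} P i P j / (P i + P j) (y i - y j)²`.
It is nonnegative, so no eigenvalue lies below `-1`, and on a connected graph it vanishes exactly
when `y` is constant, i.e. when `x` is a multiple of `√P`; `y = 1` gives `A √P = -√P`.
-/

open Matrix Finset

namespace SimpleGraph

variable {V : Type*} {G : SimpleGraph V}

theorem Reachable.eq_of_forall_adj_eq {α : Type*} {f : V → α}
    (hf : ∀ i j, G.Adj i j → f i = f j) {i j : V} (hij : G.Reachable i j) : f i = f j := by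
  obtain ⟨p⟩ := hij
  induction p with
  | nil => rfl
  | cons h _ ih => exact (hf _ _ h).trans ih

variable (G) [Fintype V] [DecidableRel G.Adj]

theorem sum_neighborFinset_comm {M : Type*} [AddCommMonoid M] (f : V → V → M) :
    ∑ i, ∑ j ∈ G.neighborFinset i, f i j = ∑ i, ∑ j ∈ G.neighborFinset i, f j i := by
  simp only [neighborFinset_eq_filter, sum_filter]
  rw [sum_comm]
  simp only [G.adj_comm]

theorem two_mul_sum_mul_sum_neighborFinset_mul_sub {R : Type*} [CommRing R]
    {w : V → V → R} (hw : ∀ i j, w i j = w j i) (y : V → R) :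
    2 * ∑ i, y i * ∑ j ∈ G.neighborFinset i, w i j * (y i - y j) =
      ∑ i, ∑ j ∈ G.neighborFinset i, w i j * (y i - y j) ^ 2 := by
  rw [two_mul]
  simp only [mul_sum]
  nth_rewrite 2 [G.sum_neighborFinset_comm]
  rw [← sum_add_distrib]
  refine sum_congr rfl fun i _ => ?_
  rw [← sum_add_distrib]
  refine sum_congr rfl fun j _ => ?_
  rw [hw j i]
  ring

theorem sum_neighborFinset_mul_sq_nonneg {w : V → V → ℝ} (hw : ∀ i j, G.Adj i j → 0 ≤ w i j)
    (y : V → ℝ) : 0 ≤ ∑ i, ∑ j ∈ G.neighborFinset i, w i j * (y i - y j) ^ 2 :=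
  sum_nonneg fun i _ => sum_nonneg fun j hj =>
    mul_nonneg (hw i j ((G.mem_neighborFinset i j).1 hj)) (sq_nonneg _)

variable {G} in
theorem Preconnected.eq_of_sum_neighborFinset_mul_sq_eq_zero (hG : G.Preconnected)
    {w : V → V → ℝ} (hw : ∀ i j, G.Adj i j → 0 < w i j) {y : V → ℝ}
    (h : ∑ i, ∑ j ∈ G.neighborFinset i, w i j * (y i - y j) ^ 2 = 0) (i j : V) : y i = y j := by
  have hterm : ∀ i, ∀ j ∈ G.neighborFinset i, 0 ≤ w i j * (y i - y j) ^ 2 := fun i j hj =>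
    mul_nonneg (hw i j ((G.mem_neighborFinset i j).1 hj)).le (sq_nonneg _)
  have hadj : ∀ i j, G.Adj i j → y i = y j := by
    intro i j hij
    have hi := (sum_eq_zero_iff_of_nonneg fun i _ => sum_nonneg (hterm i)).1 h i (mem_univ i)
    have hij' := (sum_eq_zero_iff_of_nonneg (hterm i)).1 hi j ((G.mem_neighborFinset i j).2 hij)
    rw [mul_eq_zero, pow_eq_zero_iff two_ne_zero, sub_eq_zero] at hij'
    exact hij'.resolve_left (hw i j hij).ne'
  exact (hG i j).eq_of_forall_adj_eq hadj

end SimpleGraph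

noncomputable def warmStartXYMixer {V : Type*} [Fintype V] [DecidableEq V] (G : SimpleGraph V)
    [DecidableRel G.Adj] (d : ℕ) (P : V → ℝ) : Matrix V V ℝ :=
  Matrix.of fun i j =>
    if i = j then
      (1 / (d : ℝ)) * ∑ l ∈ G.neighborFinset i, (P l - P i) / (P i + P l)
    else if G.Adj i j then
      -2 * √(P i * P j) / ((d : ℝ) * (P i + P j))
    else 0

namespace warmStartXYMixer

variable {V : Type*} [Fintype V] [DecidableEq V] {G : SimpleGraph V} [DecidableRel G.Adj]
  {d : ℕ} {P : V → ℝ}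

theorem mulVec_apply (x : V → ℝ) (i : V) :
    (warmStartXYMixer G d P *ᵥ x) i =
      (1 / (d : ℝ)) * ∑ j ∈ G.neighborFinset i, (P j - P i) / (P i + P j) * x i +
        ∑ j ∈ G.neighborFinset i, -2 * √(P i * P j) / (d * (P i + P j)) * x j := by
  have hsplit : ∀ j, warmStartXYMixer G d P i j * x j =
      (if i = j then (1 / (d : ℝ)) * ∑ l ∈ G.neighborFinset i, (P l - P i) / (P i + P l) * x i
        else 0) +
      (if G.Adj i j then -2 * √(P i * P j) / (d * (P i + P j)) * x j else 0) := by
    intro j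
    by_cases hij : i = j
    · subst hij
      simp [warmStartXYMixer, sum_mul, mul_assoc]
    · by_cases hadj : G.Adj i j <;> simp [warmStartXYMixer, hij, hadj]
  simp only [mulVec, dotProduct, hsplit, sum_add_distrib, sum_ite_eq, mem_univ, if_true,
    ← sum_filter, ← G.neighborFinset_eq_filter]

theorem mulVec_add_apply (hreg : G.IsRegularOfDegree d) (hd : d ≠ 0) (hP : ∀ i, 0 < P i)
    (x : V → ℝ) (i : V) :
    (warmStartXYMixer G d P *ᵥ x) i + x i =
      2 / (d * √(P i)) * ∑ j ∈ G.neighborFinset i,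
        P i * P j / (P i + P j) * (x i / √(P i) - x j / √(P j)) := by
  have hxi : ∑ _j ∈ G.neighborFinset i, x i / d = x i := by
    rw [sum_const, G.card_neighborFinset_eq_degree, hreg i, nsmul_eq_mul]
    field_simp
  have hterm : ∀ j ∈ G.neighborFinset i,
      1 / (d : ℝ) * ((P j - P i) / (P i + P j) * x i) +
          -2 * √(P i * P j) / (d * (P i + P j)) * x j + x i / d =
        2 / (d * √(P i)) * (P i * P j / (P i + P j) * (x i / √(P i) - x j / √(P j))) := by
    intro j _
    rw [Real.sqrt_mul (hP i).le, ← Real.sq_sqrt (hP i).le, ← Real.sq_sqrt (hP j).le,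
      Real.sqrt_sq (Real.sqrt_nonneg _), Real.sqrt_sq (Real.sqrt_nonneg _)]
    have := Real.sqrt_pos.2 (hP i)
    have := Real.sqrt_pos.2 (hP j)
    field_simp
    ring
  rw [mulVec_apply, mul_sum, mul_sum, ← sum_congr rfl hterm, sum_add_distrib, sum_add_distrib, hxi]

theorem dotProduct_mulVec_add (hreg : G.IsRegularOfDegree d) (hd : d ≠ 0) (hP : ∀ i, 0 < P i)
    (x : V → ℝ) :
    x ⬝ᵥ (warmStartXYMixer G d P *ᵥ x + x) =
      (∑ i, ∑ j ∈ G.neighborFinset i,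
        P i * P j / (P i + P j) * (x i / √(P i) - x j / √(P j)) ^ 2) / d := by
  have hsymm : ∀ i j, P i * P j / (P i + P j) = P j * P i / (P j + P i) := fun i j => by
    rw [mul_comm, add_comm]
  have hrow : ∀ i, x i * (warmStartXYMixer G d P *ᵥ x + x) i =
      2 / d * (x i / √(P i) * ∑ j ∈ G.neighborFinset i,
        P i * P j / (P i + P j) * (x i / √(P i) - x j / √(P j))) := fun i => by
    rw [Pi.add_apply, mulVec_add_apply hreg hd hP]
    field_simp
  rw [dotProduct, sum_congr rfl fun i _ => hrow i, ← mul_sum,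
    ← G.two_mul_sum_mul_sum_neighborFinset_mul_sub hsymm (fun i => x i / √(P i))]
  ring

theorem mulVec_sqrt (hreg : G.IsRegularOfDegree d) (hd : d ≠ 0) (hP : ∀ i, 0 < P i) :
    warmStartXYMixer G d P *ᵥ (fun i => √(P i)) = -fun i => √(P i) := by
  funext i
  rw [Pi.neg_apply, eq_neg_iff_add_eq_zero, mulVec_add_apply hreg hd hP]
  simp [div_self (Real.sqrt_pos.2 (hP _)).ne']

theorem neg_one_le_of_mulVec_eq_smul (hreg : G.IsRegularOfDegree d) (hd : d ≠ 0)
    (hP : ∀ i, 0 < P i) {μ : ℝ} {x : V → ℝ} (hx : x ≠ 0)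
    (hμ : warmStartXYMixer G d P *ᵥ x = μ • x) : -1 ≤ μ := by
  have hform := dotProduct_mulVec_add hreg hd hP x
  rw [hμ, show μ • x + x = (μ + 1) • x by module, dotProduct_smul, smul_eq_mul] at hform
  have hxx : 0 < x ⬝ᵥ x := by simpa using dotProduct_star_self_pos_iff.2 hx
  have : 0 ≤ (μ + 1) * (x ⬝ᵥ x) := by
    rw [hform]
    exact div_nonneg (G.sum_neighborFinset_mul_sq_nonneg
      (fun i j _ => by have := hP i; have := hP j; positivity) _) d.cast_nonneg
  linarith [(mul_nonneg_iff_of_pos_right hxx).1 this]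

theorem exists_eq_smul_sqrt_of_mulVec_eq_neg (hconn : G.Connected)
    (hreg : G.IsRegularOfDegree d) (hd : d ≠ 0) (hP : ∀ i, 0 < P i) {x : V → ℝ}
    (hx : warmStartXYMixer G d P *ᵥ x = -x) : ∃ c : ℝ, x = c • fun i => √(P i) := by
  have hform := dotProduct_mulVec_add hreg hd hP x
  rw [hx, neg_add_cancel, dotProduct_zero, eq_comm, div_eq_zero_iff,
    or_iff_left (Nat.cast_ne_zero.2 hd)] at hform
  have hconst := hconn.preconnected.eq_of_sum_neighborFinset_mul_sq_eq_zero
    (fun i j _ => by have := hP i; have := hP j; positivity) hform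
  obtain ⟨i₀⟩ := hconn.nonempty
  refine ⟨x i₀ / √(P i₀), funext fun i => ?_⟩
  rw [Pi.smul_apply, smul_eq_mul, hconst i₀ i, div_mul_cancel₀ _ (Real.sqrt_pos.2 (hP i)).ne']

end warmStartXYMixer

theorem statement6 (k : ℕ)
    (G : SimpleGraph (Fin k)) [DecidableRel G.Adj]
    (hconn : G.Connected) (d : ℕ) (hd : 1 ≤ d) (hreg : G.IsRegularOfDegree d)
    (P : Fin k → ℝ) (hpos : ∀ i, 0 < P i)
    (A : Matrix (Fin k) (Fin k) ℝ)
    (hA : ∀ i j, A i j =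
      if i = j then
        (1 / (d : ℝ)) * ∑ l ∈ G.neighborFinset i, (P l - P i) / (P i + P l)
      else if G.Adj i j then
        -2 * Real.sqrt (P i * P j) / ((d : ℝ) * (P i + P j))
      else 0)
    (v : Fin k → ℝ) (hv : ∀ i, v i = Real.sqrt (P i)) :
    A.mulVec v = -v ∧
    (∀ μ : ℝ, ∀ x : Fin k → ℝ, x ≠ 0 → A.mulVec x = μ • x → -1 ≤ μ) ∧
    (∀ x : Fin k → ℝ, A.mulVec x = -x → ∃ c : ℝ, x = c • v) := by
  obtain rfl : A = warmStartXYMixer G d P := Matrix.ext hA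
  obtain rfl : v = fun i => √(P i) := funext hv
  have hd0 : d ≠ 0 := by omega
  exact ⟨warmStartXYMixer.mulVec_sqrt hreg hd0 hpos,
    fun _ _ hx hμ => warmStartXYMixer.neg_one_le_of_mulVec_eq_smul hreg hd0 hpos hx hμ,
    fun _ hx => warmStartXYMixer.exists_eq_smul_sqrt_of_mulVec_eq_neg hconn hreg hd0 hpos hx⟩
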